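/- arXiv:1708.05735 — 5 statements merged into one kernel-verified Lean document; each statement's English description precedes it below -/
import Mathlib

section
/- If k is an exposed point of the Minkowski combination Σ_j p_j K_j of nonempty compact convex sets K_j (p_j > 0), exposed by a linear functional f, then the representation k = Σ_j p_j k_j with k_j ∈ K_j is unique, and each k_j is the unique maximizer of f over K_j (hence an exposed point of K_j). -/
open scoped Pointwise

theorem exposed_point_unique_representation
    {d N : ℕ} (K : Fin N → Set (EuclideanSpace ℝ (Fin d)))
    (hKne : ∀ j, (K j).Nonempty) (hKc : ∀ j, IsCompact (K j))
    (hKconv : ∀ j, Convex ℝ (K j))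
    (p : Fin N → ℝ) (hp : ∀ j, 0 < p j)
    (f : EuclideanSpace ℝ (Fin d) →ₗ[ℝ] ℝ)
    (k : EuclideanSpace ℝ (Fin d))
    (hk : k ∈ ∑ j, p j • K j)
    (hexp : ∀ x ∈ ∑ j, p j • K j, x ≠ k → f x < f k) :
    (∀ k₁ k₂ : Fin N → EuclideanSpace ℝ (Fin d),
      (∀ j, k₁ j ∈ K j) → (∀ j, k₂ j ∈ K j) →
      k = ∑ j, p j • k₁ j → k = ∑ j, p j • k₂ j → k₁ = k₂) ∧
    (∀ kk : Fin N → EuclideanSpace ℝ (Fin d),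
      (∀ j, kk j ∈ K j) → k = ∑ j, p j • kk j →
      ∀ j, ∀ y ∈ K j, y ≠ kk j → f y < f (kk j)) := by
  have main : ∀ kk : Fin N → EuclideanSpace ℝ (Fin d),
      (∀ j, kk j ∈ K j) → k = ∑ j, p j • kk j →
      ∀ j, ∀ y ∈ K j, y ≠ kk j → f y < f (kk j) := by
    intro kk hkk hrep j y hy hne
    classical
    set g : Fin N → EuclideanSpace ℝ (Fin d) := Function.update kk j y with hg
    have hgmem : ∀ i, g i ∈ K i := by
      intro i
      by_cases hij : i = j
      · subst hij; simpa [hg] using hy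
      · simpa [hg, Function.update_of_ne hij] using hkk i
    have hxmem : (∑ i, p i • g i) ∈ ∑ i, p i • K i := by
      refine Set.finset_sum_mem_finset_sum Finset.univ _ _ ?_
      intro i _
      exact Set.smul_mem_smul_set (hgmem i)
    have hdiff : (∑ i, p i • g i) - k = p j • y - p j • kk j := by
      rw [hrep, ← Finset.sum_sub_distrib]
      rw [Finset.sum_eq_single j]
      · simp [hg]
      · intro i _ hij
        simp [hg, Function.update_of_ne hij]
      · simp
    have hxne : (∑ i, p i • g i) ≠ k := by
      intro h
      rw [h, sub_self] at hdiff
      have : p j • y = p j • kk j := sub_eq_zero.mp hdiff.symm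
      exact hne (smul_right_injective _ (hp j).ne' this)
    have hlt := hexp _ hxmem hxne
    have hfk : f (∑ i, p i • g i) = f k + p j * f y - p j * f (kk j) := by
      have := congrArg f hdiff
      rw [map_sub, map_sub, map_smul, map_smul] at this
      simp only [smul_eq_mul] at this
      linarith
    rw [hfk] at hlt
    have := (hp j)
    nlinarith
  refine ⟨?_, main⟩
  intro k₁ k₂ h₁ h₂ hr₁ hr₂
  funext j
  by_contra hne
  have h12 := main k₁ h₁ hr₁ j (k₂ j) (h₂ j) (fun h => hne h.symm)
  have h21 := main k₂ h₂ hr₂ j (k₁ j) (h₁ j) hne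
  exact absurd h12 (not_lt.mpr h21.le)
end

section
/- If a linear functional f does not uniquely maximize over some K_j (j with p_j > 0), then f does not expose any point of the Minkowski combination Σ_j p_j K_j of nonempty compact convex sets. -/
open scoped Pointwise

theorem no_exposed_point_of_nonunique_argmax
    {d N : ℕ} (K : Fin N → Set (EuclideanSpace ℝ (Fin d)))
    (hKne : ∀ j, (K j).Nonempty) (hKc : ∀ j, IsCompact (K j))
    (hKconv : ∀ j, Convex ℝ (K j))
    (p : Fin N → ℝ) (hp : ∀ j, 0 < p j) (hpsum : ∑ j, p j = 1)
    (f : EuclideanSpace ℝ (Fin d) →ₗ[ℝ] ℝ)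
    (j₀ : Fin N)
    (y₁ y₂ : EuclideanSpace ℝ (Fin d))
    (hy₁ : y₁ ∈ K j₀) (hy₂ : y₂ ∈ K j₀) (hne : y₁ ≠ y₂)
    (hmax₁ : ∀ y ∈ K j₀, f y ≤ f y₁) (hmax₂ : ∀ y ∈ K j₀, f y ≤ f y₂) :
    ¬ ∃ k ∈ ∑ j, p j • K j, ∀ x ∈ ∑ j, p j • K j, x ≠ k → f x < f k := by
  rintro ⟨k, hk, hexp⟩
  rw [Set.mem_fintype_sum] at hk
  obtain ⟨g, hg, hgk⟩ := hk
  obtain ⟨x₀, hx₀, hx₀g⟩ := hg j₀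
  classical
  -- points obtained by replacing the j₀ component with y₁ / y₂
  have key : ∀ y, y ∈ K j₀ → (∀ z ∈ K j₀, f z ≤ f y) →
      k = p j₀ • y + ∑ j ∈ Finset.univ \ {j₀}, g j := by
    intro y hy hymax
    set w := ∑ j, Function.update g j₀ (p j₀ • y) j with hw
    have hwmem : w ∈ ∑ j, p j • K j := by
      apply Set.finset_sum_mem_finset_sum
      intro i _
      by_cases hi : i = j₀
      · subst hi
        rw [Function.update_self]
        exact Set.smul_mem_smul_set hy
      · rw [Function.update_of_ne hi]
        exact hg i
    have hwsum : w = p j₀ • y + ∑ j ∈ Finset.univ \ {j₀}, g j := by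
      rw [hw, Finset.sum_update_of_mem (Finset.mem_univ j₀)]
    have hksum : k = p j₀ • x₀ + ∑ j ∈ Finset.univ \ {j₀}, g j := by
      rw [← hgk, Finset.sum_eq_add_sum_sdiff_singleton_of_mem (Finset.mem_univ j₀) g, ← hx₀g]
    have hfw : f k ≤ f w := by
      rw [hwsum, hksum, map_add, map_add, map_smul, map_smul]
      simp only [smul_eq_mul]
      nlinarith [hymax x₀ hx₀, hp j₀]
    have : w = k := by
      by_contra hwk
      exact absurd (hexp w hwmem hwk) (not_lt.mpr hfw)
    rw [← this, hwsum]
  have h1 := key y₁ hy₁ hmax₁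
  have h2 := key y₂ hy₂ hmax₂
  have : p j₀ • y₁ = p j₀ • y₂ := by
    have := h1.symm.trans h2
    exact add_right_cancel this
  exact hne (smul_right_injective _ (ne_of_gt (hp j₀)) this)
end

section
/- Shapley–Folkman–Starr bound: for nonempty compact sets K₁,…,K_N ⊆ ℝ^d, the Hausdorff distance between (1/N)(K₁+…+K_N) and (1/N)·convexHull(K₁+…+K_N) is at most (√d / N) · max_i sup_{k∈K_i} ‖k‖. -/
/-!
Shapley–Folkman: lift each `K i` to `K i ×ˢ {eᵢ}` in `E × (ι → ℝ)`. A point `x = ∑ xᵢ` with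
`xᵢ ∈ convexHull (K i)` lifts to `n⁻¹ • (x, 1)` in the convex hull of the union of the lifts,
and Carathéodory writes it with affinely independent atoms. These lie on the hyperplane
`∑ⱼ tⱼ = 1`, so they are linearly independent and there are at most `dim E + n` of them.
Every index carries at least one atom, hence at most `dim E` indices carry two or more;
grouping the atoms by index gives points `yᵢ`, all in `K i` except for at most `dim E` indices.

Starr: for those exceptional indices replace `yᵢ` greedily by `kᵢ ∈ K i` so that the
accumulated error `e` satisfies `‖e + (yᵢ - kᵢ)‖² ≤ ‖e‖² + L²`; this is possible because the
linear functional `⟪e + yᵢ, ·⟫` attains on `K i` at least its value at `yᵢ ∈ convexHull (K i)`.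
The final error is at most `√(dim E) * L`, and scaling by `N⁻¹` gives the bound.
-/

open scoped Pointwise
open Finset Module

theorem AffineIndependent.linearIndependent_of_forall_apply_eq {k V ι : Type*} [Ring k]
    [NoZeroDivisors k] [AddCommGroup V] [Module k V] {z : ι → V} (hz : AffineIndependent k z)
    (φ : V →ₗ[k] k) {c : k} (hc : c ≠ 0) (hφ : ∀ i, φ (z i) = c) : LinearIndependent k z := by
  rw [linearIndependent_iff']
  intro s g hg
  have hsum : ∑ i ∈ s, g i = 0 := by
    have := congrArg φ hg
    simp only [map_sum, map_smul, smul_eq_mul, hφ, ← Finset.sum_mul, map_zero] at this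
    exact (mul_eq_zero.1 this).resolve_right hc
  exact affineIndependent_iff.1 hz s g hsum hg

theorem AffineIndependent.card_le_finrank_add_card_of_sum_snd_eq_one {E ι κ : Type*}
    [AddCommGroup E] [Module ℝ E] [FiniteDimensional ℝ E] [Fintype ι] [Fintype κ]
    {z : κ → E × (ι → ℝ)} (hz : AffineIndependent ℝ z) (hsum : ∀ j, ∑ i, (z j).2 i = 1) :
    Fintype.card κ ≤ finrank ℝ E + Fintype.card ι := by
  let φ : E × (ι → ℝ) →ₗ[ℝ] ℝ := (∑ i, LinearMap.proj i) ∘ₗ LinearMap.snd ℝ E (ι → ℝ)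
  have hφ : ∀ j, φ (z j) = 1 := fun j => by simp [φ, hsum]
  simpa [finrank_prod, finrank_fintype_fun_eq_card] using
    (hz.linearIndependent_of_forall_apply_eq φ one_ne_zero hφ).fintype_card_le_finrank

theorem Fintype.card_add_card_filter_one_lt_card_fiber_le {α β : Type*} [Fintype α] [Fintype β]
    [DecidableEq β] {f : α → β} (hf : Function.Surjective f) :
    card β + #{b | 1 < #{a | f a = b}} ≤ card α := by
  calc card β + #{b | 1 < #{a | f a = b}}
      = ∑ b, (1 + if 1 < #{a | f a = b} then 1 else 0) := by
        simp [sum_add_distrib, sum_boole]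
    _ ≤ ∑ b, #{a | f a = b} := by
        gcongr with b
        obtain ⟨a, rfl⟩ := hf b
        have : 0 < #{a' | f a' = f a} := Finset.card_pos.2 ⟨a, by simp⟩
        split_ifs <;> omega
    _ = card α := by simp [← card_eq_sum_card_fiberwise (fun a _ => mem_univ (f a))]

theorem Finset.centerMass_mem_of_card_eq_one {R E ι : Type*} [Field R] [AddCommGroup E]
    [Module R E] {t : Finset ι} {w : ι → R} {z : ι → E} {s : Set E} (ht : #t = 1)
    (hw : ∀ i ∈ t, w i ≠ 0) (hz : ∀ i ∈ t, z i ∈ s) : t.centerMass w z ∈ s := by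
  obtain ⟨i, rfl⟩ := card_eq_one.1 ht
  rw [centerMass_singleton _ _ (hw i (mem_singleton_self i))]
  exact hz i (mem_singleton_self i)

theorem mem_convexHull_iUnion_prod_single {E ι : Type*} [AddCommGroup E] [Module ℝ E]
    [Fintype ι] [Nonempty ι] [DecidableEq ι] {K : ι → Set E} {x : E}
    (hx : x ∈ ∑ i, convexHull ℝ (K i)) :
    (Fintype.card ι : ℝ)⁻¹ • (x, (1 : ι → ℝ)) ∈
      convexHull ℝ (⋃ i, K i ×ˢ {(Pi.single i 1 : ι → ℝ)}) := by
  obtain ⟨g, hg, rfl⟩ := (Set.mem_fintype_sum _ _).1 hx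
  have hlift : ∀ i,
      (g i, Pi.single i 1) ∈ convexHull ℝ (⋃ i, K i ×ˢ {(Pi.single i 1 : ι → ℝ)}) :=
    fun i => convexHull_mono (Set.subset_iUnion (fun i => K i ×ˢ {Pi.single i 1}) i)
      (by simpa using hg i)
  have hsum : (∑ i, g i, (1 : ι → ℝ)) = ∑ i, (g i, Pi.single i 1) := by
    ext <;> simp [Prod.fst_sum, Prod.snd_sum]
  rw [hsum, smul_sum]
  refine (convex_convexHull ℝ _).sum_mem (fun _ _ => by positivity) ?_ fun i _ => hlift i
  simp [Finset.card_univ, Fintype.card_ne_zero]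

theorem shapley_folkman {E ι : Type*} [AddCommGroup E] [Module ℝ E] [FiniteDimensional ℝ E]
    [Fintype ι] {K : ι → Set E} {x : E} (hx : x ∈ ∑ i, convexHull ℝ (K i)) :
    ∃ (s : Finset ι) (y : ι → E), #s ≤ finrank ℝ E ∧ (∀ i, y i ∈ convexHull ℝ (K i)) ∧
      (∀ i ∉ s, y i ∈ K i) ∧ ∑ i, y i = x := by
  classical
  cases isEmpty_or_nonempty ι
  · refine ⟨∅, isEmptyElim, by simp, isEmptyElim, isEmptyElim, ?_⟩
    simpa [eq_comm] using hx
  have hn : (Fintype.card ι : ℝ) ≠ 0 := by simp [Fintype.card_ne_zero]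
  obtain ⟨κ, _, z, w, hzA, hind, hw0, -, hwz⟩ :=
    eq_pos_convex_span_of_mem_convexHull (mem_convexHull_iUnion_prod_single (K := K) hx)
  have hdecode : ∀ j, ∃ i, (z j).1 ∈ K i ∧ (z j).2 = Pi.single i 1 := fun j => by
    simpa [Set.mem_prod] using hzA (Set.mem_range_self j)
  choose a hk hsingle using hdecode
  have hcard : Fintype.card κ ≤ finrank ℝ E + Fintype.card ι :=
    hind.card_le_finrank_add_card_of_sum_snd_eq_one fun j => by simp [hsingle j]
  have hfiber : ∀ i, ∑ j with a j = i, w j = (Fintype.card ι : ℝ)⁻¹ := fun i => by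
    have := congrArg (fun p => p.2 i) hwz
    simpa [Prod.snd_sum, hsingle, Pi.single_apply, sum_filter, eq_comm] using this
  have hne : ∀ i, ({j | a j = i} : Finset κ).Nonempty := fun i =>
    nonempty_of_sum_ne_zero ((hfiber i).trans_ne (inv_ne_zero hn))
  have ha : Function.Surjective a := fun i => by
    obtain ⟨j, hj⟩ := hne i
    exact ⟨j, (mem_filter.1 hj).2⟩
  have hfiberK : ∀ i, ∀ j ∈ ({j | a j = i} : Finset κ), (z j).1 ∈ K i := fun i j hj =>
    (mem_filter.1 hj).2 ▸ hk j
  refine ⟨({i | 1 < #{j | a j = i}} : Finset ι),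
    fun i => centerMass {j | a j = i} w (fun j => (z j).1), ?_, fun i => ?_, fun i hi => ?_, ?_⟩
  · have := Fintype.card_add_card_filter_one_lt_card_fiber_le ha
    omega
  · exact centerMass_mem_convexHull _ (fun j _ => (hw0 j).le) (by rw [hfiber]; positivity)
      (hfiberK i)
  · exact centerMass_mem_of_card_eq_one (le_antisymm (by simpa using hi) (hne i).card_pos)
      (fun j _ => (hw0 j).ne') (hfiberK i)
  · have hfst := congrArg Prod.fst hwz
    simp only [Prod.fst_sum, Prod.smul_fst] at hfst
    simp only [centerMass, hfiber, inv_inv]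
    rw [← smul_sum, sum_fiberwise univ a, hfst, smul_smul, mul_inv_cancel₀ hn, one_smul]

section InnerProductSpace

variable {E : Type*} [NormedAddCommGroup E] [InnerProductSpace ℝ E]

theorem exists_norm_add_sub_sq_le_of_mem_convexHull {K : Set E} {L : ℝ}
    (hL : ∀ k ∈ K, ‖k‖ ≤ L) {x : E} (hx : x ∈ convexHull ℝ K) (c : E) :
    ∃ k ∈ K, ‖c + (x - k)‖ ^ 2 ≤ ‖c‖ ^ 2 + L ^ 2 := by
  obtain ⟨k, hk, hinner⟩ := ((innerₛₗ ℝ (c + x)).convexOn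
    (convex_convexHull ℝ K)).exists_ge_of_mem_convexHull (subset_convexHull ℝ K) hx
  simp only [innerₛₗ_apply_apply] at hinner
  have hkL : ‖k‖ ^ 2 ≤ L ^ 2 := pow_le_pow_left₀ (norm_nonneg k) (hL k hk) 2
  refine ⟨k, hk, ?_⟩
  calc ‖c + (x - k)‖ ^ 2 = ‖c + x‖ ^ 2 - 2 * inner ℝ (c + x) k + ‖k‖ ^ 2 := by
        rw [← add_sub_assoc, norm_sub_sq_real]
    _ ≤ ‖c + x‖ ^ 2 - 2 * inner ℝ (c + x) x + L ^ 2 := by linarith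
    _ = ‖c‖ ^ 2 - ‖x‖ ^ 2 + L ^ 2 := by
        rw [norm_add_sq_real, inner_add_left, real_inner_self_eq_norm_sq]; ring
    _ ≤ ‖c‖ ^ 2 + L ^ 2 := by linarith [sq_nonneg ‖x‖]

theorem exists_norm_sum_sub_sq_le {ι : Type*} [DecidableEq ι] {K : ι → Set E} {L : ι → ℝ}
    (hL : ∀ i, ∀ k ∈ K i, ‖k‖ ≤ L i) {x : ι → E} (hx : ∀ i, x i ∈ convexHull ℝ (K i))
    (s : Finset ι) :
    ∃ f : ι → E, (∀ i ∈ s, f i ∈ K i) ∧ (∀ i ∉ s, f i = x i) ∧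
      ‖∑ i ∈ s, (x i - f i)‖ ^ 2 ≤ ∑ i ∈ s, L i ^ 2 := by
  induction s using Finset.induction_on with
  | empty => exact ⟨x, by simp, fun _ _ => rfl, by simp⟩
  | insert a s ha ih =>
    obtain ⟨f, hfK, hfx, hf⟩ := ih
    obtain ⟨k, hk, hkle⟩ := exists_norm_add_sub_sq_le_of_mem_convexHull (hL a) (hx a)
      (∑ i ∈ s, (x i - f i))
    have hupdate : ∀ i ∈ s, Function.update f a k i = f i := fun i hi =>
      Function.update_of_ne (ne_of_mem_of_not_mem hi ha) _ _
    refine ⟨Function.update f a k, ?_, ?_, ?_⟩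
    · intro i hi
      rcases mem_insert.1 hi with rfl | hi
      · simpa using hk
      · simpa [hupdate i hi] using hfK i hi
    · intro i hi
      rw [mem_insert, not_or] at hi
      rw [Function.update_of_ne hi.1, hfx i hi.2]
    · have hsum : ∑ i ∈ s, (x i - Function.update f a k i) = ∑ i ∈ s, (x i - f i) :=
        sum_congr rfl fun i hi => by rw [hupdate i hi]
      rw [sum_insert ha, sum_insert ha, Function.update_self, hsum, add_comm]
      linarith

theorem exists_dist_le_of_mem_convexHull_sum [FiniteDimensional ℝ E] {ι : Type*} [Fintype ι]
    {K : ι → Set E} {L : ℝ} (hL0 : 0 ≤ L) (hL : ∀ i, ∀ k ∈ K i, ‖k‖ ≤ L) {z : E}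
    (hz : z ∈ convexHull ℝ (∑ i, K i)) :
    ∃ p ∈ ∑ i, K i, dist z p ≤ √(finrank ℝ E) * L := by
  classical
  rw [convexHull_sum] at hz
  obtain ⟨s, y, hs, hy, hyK, rfl⟩ := shapley_folkman (K := K) hz
  obtain ⟨f, hfK, hfy, hf⟩ := exists_norm_sum_sub_sq_le hL hy s
  have hfK' : ∀ i, f i ∈ K i := fun i => by
    by_cases hi : i ∈ s
    · exact hfK i hi
    · exact hfy i hi ▸ hyK i hi
  refine ⟨∑ i, f i, Set.finsetSum_mem_finsetSum _ _ _ fun i _ => hfK' i, ?_⟩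
  have hdiff : ∑ i, y i - ∑ i, f i = ∑ i ∈ s, (y i - f i) := by
    rw [← sum_sub_distrib]
    exact (sum_subset (subset_univ s) fun i _ hi => by simp [hfy i hi]).symm
  rw [dist_eq_norm, hdiff, ← pow_le_pow_iff_left₀ (norm_nonneg _) (by positivity) two_ne_zero,
    mul_pow, Real.sq_sqrt (Nat.cast_nonneg _)]
  calc _ ≤ ∑ i ∈ s, L ^ 2 := hf
    _ = #s * L ^ 2 := by rw [sum_const, nsmul_eq_mul]
    _ ≤ finrank ℝ E * L ^ 2 := by gcongr

end InnerProductSpace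

theorem Metric.hausdorffDist_smul_le_of_subset {𝕜 E : Type*} [NormedField 𝕜]
    [SeminormedAddCommGroup E] [NormedSpace 𝕜 E] {s t : Set E} {r : ℝ} (hr : 0 ≤ r)
    (hst : s ⊆ t) (h : ∀ z ∈ t, ∃ p ∈ s, dist z p ≤ r) (c : 𝕜) :
    hausdorffDist (c • s) (c • t) ≤ ‖c‖ * r := by
  refine hausdorffDist_le_of_mem_dist (by positivity) ?_ ?_
  · rintro _ ⟨p, hp, rfl⟩
    exact ⟨c • p, Set.smul_mem_smul_set (hst hp), by simp; positivity⟩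
  · rintro _ ⟨z, hz, rfl⟩
    obtain ⟨p, hp, hzp⟩ := h z hz
    exact ⟨c • p, Set.smul_mem_smul_set hp, by rw [dist_smul₀]; gcongr⟩

theorem shapley_folkman_starr_general
    {d N : ℕ} (K : Fin N → Set (EuclideanSpace ℝ (Fin d)))
    (hKc : ∀ i, IsCompact (K i)) :
    Metric.hausdorffDist
        ((N : ℝ)⁻¹ • ∑ i, K i)
        ((N : ℝ)⁻¹ • convexHull ℝ (∑ i, K i))
      ≤ (Real.sqrt d / N) * ⨆ i, sSup ((fun k => ‖k‖) '' K i) := by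
  set L := ⨆ i, sSup ((fun k => ‖k‖) '' K i)
  have hL : ∀ i, ∀ k ∈ K i, ‖k‖ ≤ L := fun i k hk =>
    (le_csSup ((hKc i).image continuous_norm).bddAbove ⟨k, hk, rfl⟩).trans
      (le_ciSup (f := fun i => sSup ((fun k => ‖k‖) '' K i)) (Set.finite_range _).bddAbove i)
  have hL0 : 0 ≤ L := Real.iSup_nonneg fun i => Real.sSup_nonneg <| by
    rintro _ ⟨k, -, rfl⟩
    exact norm_nonneg k
  calc _ ≤ ‖(N : ℝ)⁻¹‖ * (√d * L) :=
        Metric.hausdorffDist_smul_le_of_subset (by positivity) (subset_convexHull ℝ _)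
          (fun z hz => by simpa using exists_dist_le_of_mem_convexHull_sum hL0 hL hz) _
    _ = √d / N * L := by rw [norm_inv, Real.norm_natCast]; ring

theorem shapley_folkman_starr
    {d N : ℕ} (hN : 0 < N) (K : Fin N → Set (EuclideanSpace ℝ (Fin d)))
    (hKne : ∀ i, (K i).Nonempty) (hKc : ∀ i, IsCompact (K i)) :
    Metric.hausdorffDist
        ((N : ℝ)⁻¹ • ∑ i, K i)
        ((N : ℝ)⁻¹ • convexHull ℝ (∑ i, K i))
      ≤ (Real.sqrt d / N) * ⨆ i, sSup ((fun k => ‖k‖) '' K i) :=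
  shapley_folkman_starr_general K hKc
end

section
/- If a linear functional f ≠ 0 is a facet of a compact convex set K at k ∈ K with direction d (so f(d) = 1), then any other facet g of K at k is a positive scalar multiple of f: g = g(d)·f. -/
/-!
Taking `x = k` in the facet condition for `g` shows that `k` maximizes `g` on `K`. If `f w = 0`,
the facet condition for `f` at the points `k + t • w` (which it leaves fixed) puts the whole
segment `k + t • w`, `|t|` small, inside `K`; so `t ↦ g (k + t • w)` has a local maximum at `0`
and `g w = 0`. Hence `ker f ≤ ker g`, and since `f d = 1` this forces `g = g d • f`.
-/

open Filter Topology

section Facet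

variable {E : Type*} [AddCommGroup E] [Module ℝ E]

def IsFacetAt [TopologicalSpace E] (K : Set E) (k : E) (f : E →ₗ[ℝ] ℝ) (d : E) : Prop :=
  ∀ᶠ x in 𝓝 k, x - f (x - k) • d ∈ {y ∈ K | ∀ y' ∈ K, f y' ≤ f y}

theorem LinearMap.apply_eq_mul_of_ker_le {f g : E →ₗ[ℝ] ℝ} {d : E} (hfd : f d = 1)
    (hker : LinearMap.ker f ≤ LinearMap.ker g) (y : E) : g y = g d * f y := by
  have hy : y - f y • d ∈ LinearMap.ker f := by simp [hfd]
  have := hker hy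
  simp only [LinearMap.mem_ker, map_sub, map_smul, smul_eq_mul, sub_eq_zero] at this
  rw [this, mul_comm]

theorem LinearMap.apply_eq_zero_of_isMaxOn {g : E →ₗ[ℝ] ℝ} {K : Set E} {k w : E}
    (hmax : IsMaxOn g K k) (hline : ∀ᶠ t in 𝓝 (0 : ℝ), k + t • w ∈ K) : g w = 0 := by
  have hloc : IsLocalMax (fun t : ℝ ↦ g (k + t • w)) 0 :=
    hline.mono fun t ht ↦ by simpa using hmax ht
  have hderiv : HasDerivAt (fun t : ℝ ↦ g (k + t • w)) (g w) 0 := by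
    simpa using ((hasDerivAt_id (0 : ℝ)).mul_const (g w)).const_add (g k)
  exact hloc.hasDerivAt_eq_zero hderiv

variable [TopologicalSpace E] {K : Set E} {k d : E} {f : E →ₗ[ℝ] ℝ}

theorem IsFacetAt.isMaxOn (h : IsFacetAt K k f d) : IsMaxOn f K k :=
  fun y hy ↦ by simpa using h.self_of_nhds.2 y hy

theorem IsFacetAt.eventually_add_smul_mem [ContinuousAdd E] [ContinuousSMul ℝ E]
    (h : IsFacetAt K k f d) {w : E} (hw : f w = 0) : ∀ᶠ t in 𝓝 (0 : ℝ), k + t • w ∈ K := by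
  have hcont : Tendsto (fun t : ℝ ↦ k + t • w) (𝓝 0) (𝓝 k) := by
    have : Continuous fun t : ℝ ↦ k + t • w := by fun_prop
    simpa using this.tendsto 0
  exact (hcont.eventually h).mono fun t ht ↦ by simpa [hw] using ht.1

theorem IsFacetAt.ker_le_ker [ContinuousAdd E] [ContinuousSMul ℝ E] {g : E →ₗ[ℝ] ℝ} {d' : E}
    (hf : IsFacetAt K k f d) (hg : IsFacetAt K k g d') : LinearMap.ker f ≤ LinearMap.ker g :=
  fun _ hw ↦ g.apply_eq_zero_of_isMaxOn hg.isMaxOn (hf.eventually_add_smul_mem hw)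

end Facet

theorem facet_unique_up_to_scalar_general
    {n : ℕ} (K : Set (EuclideanSpace ℝ (Fin n)))
    (k : EuclideanSpace ℝ (Fin n))
    (f : EuclideanSpace ℝ (Fin n) →ₗ[ℝ] ℝ)
    (d : EuclideanSpace ℝ (Fin n)) (hfd : f d = 1)
    (hfacet : ∃ U ∈ nhds k, ∀ x ∈ U,
      x - f (x - k) • d ∈ {y ∈ K | ∀ y' ∈ K, f y' ≤ f y})
    (g : EuclideanSpace ℝ (Fin n) →ₗ[ℝ] ℝ)
    (d' : EuclideanSpace ℝ (Fin n))
    (hgfacet : ∃ U ∈ nhds k, ∀ x ∈ U,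
      x - g (x - k) • d' ∈ {y ∈ K | ∀ y' ∈ K, g y' ≤ g y}) :
    ∀ y, g y = g d * f y := by
  have hf : IsFacetAt K k f d := eventually_iff_exists_mem.2 hfacet
  have hg : IsFacetAt K k g d' := eventually_iff_exists_mem.2 hgfacet
  exact LinearMap.apply_eq_mul_of_ker_le hfd (hf.ker_le_ker hg)

theorem facet_unique_up_to_scalar
    {n : ℕ} (K : Set (EuclideanSpace ℝ (Fin n)))
    (hKne : K.Nonempty) (hKc : IsCompact K) (hKconv : Convex ℝ K)
    (k : EuclideanSpace ℝ (Fin n)) (hk : k ∈ K)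
    (f : EuclideanSpace ℝ (Fin n) →ₗ[ℝ] ℝ) (hf : f ≠ 0)
    (d : EuclideanSpace ℝ (Fin n)) (hfd : f d = 1)
    (hfacet : ∃ U ∈ nhds k, ∀ x ∈ U,
      x - f (x - k) • d ∈ {y ∈ K | ∀ y' ∈ K, f y' ≤ f y})
    (g : EuclideanSpace ℝ (Fin n) →ₗ[ℝ] ℝ) (hg : g ≠ 0)
    (d' : EuclideanSpace ℝ (Fin n))
    (hgfacet : ∃ U ∈ nhds k, ∀ x ∈ U,
      x - g (x - k) • d' ∈ {y ∈ K | ∀ y' ∈ K, g y' ≤ g y}) :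
    ∀ y, g y = g d * f y :=
  facet_unique_up_to_scalar_general K k f d hfd hfacet g d' hgfacet
end

section
/- Facets are inherited by Minkowski combinations: if f is a facet of the compact convex set K₁ at k₁ ∈ K₁ (with p₁ > 0), and K₂,…,K_J are nonempty compact convex sets with weights p_j > 0 summing with p₁ to 1, then f is a facet of Σ_j p_j K_j at the point p₁k₁ + Σ_{j≥2} p_j k_j, where each k_j ∈ argmax_{K_j} f. -/
open scoped Pointwise
open Filter Topology

/-!
Write the combination as `p₁ • K₁ + L` with `L = Σ_{j ≥ 2} p_j • K_j`. Maximizers of a linear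
functional add up and scale along Minkowski sums, so `Σ_{j ≥ 2} p_j k_j` maximizes `f` on `L`.
A facet of `K₁` at `k₁` then transfers to `p₁ • K₁` at `p₁ k₁` by rescaling the neighbourhood,
and to `p₁ • K₁ + L` at `p₁ k₁ + s` by translating it by a maximizer `s` of `f` on `L`,
with the same direction `d` throughout.
-/

section Maximizers

variable {E : Type*} [AddCommGroup E] [Module ℝ E]

def maximizers (f : E → ℝ) (K : Set E) : Set E := {y ∈ K | ∀ y' ∈ K, f y' ≤ f y}

variable {f : E →ₗ[ℝ] ℝ} {K L : Set E} {y z : E}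

lemma zero_mem_maximizers_zero : (0 : E) ∈ maximizers f 0 := by
  simp [maximizers]

lemma add_mem_maximizers_add (hy : y ∈ maximizers f K) (hz : z ∈ maximizers f L) :
    y + z ∈ maximizers f (K + L) := by
  refine ⟨Set.add_mem_add hy.1 hz.1, ?_⟩
  rintro _ ⟨y', hy', z', hz', rfl⟩
  rw [map_add, map_add]
  exact add_le_add (hy.2 y' hy') (hz.2 z' hz')

lemma smul_mem_maximizers_smul {c : ℝ} (hc : 0 ≤ c) (hy : y ∈ maximizers f K) :
    c • y ∈ maximizers f (c • K) := by
  refine ⟨Set.smul_mem_smul_set hy.1, ?_⟩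
  rintro _ ⟨y', hy', rfl⟩
  rw [map_smul, map_smul, smul_eq_mul, smul_eq_mul]
  exact mul_le_mul_of_nonneg_left (hy.2 y' hy') hc

lemma sum_smul_mem_maximizers_sum_smul {ι : Type*} (s : Finset ι) {K : ι → Set E} {y : ι → E}
    {p : ι → ℝ} (hp : ∀ j ∈ s, 0 ≤ p j) (hy : ∀ j ∈ s, y j ∈ maximizers f (K j)) :
    ∑ j ∈ s, p j • y j ∈ maximizers f (∑ j ∈ s, p j • K j) := by
  classical
  induction s using Finset.induction_on with
  | empty => exact zero_mem_maximizers_zero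
  | insert i s hi ih =>
    rw [Finset.sum_insert hi, Finset.sum_insert hi]
    exact add_mem_maximizers_add
      (smul_mem_maximizers_smul (hp i (s.mem_insert_self i)) (hy i (s.mem_insert_self i)))
      (ih (fun j hj => hp j (Finset.mem_insert_of_mem hj))
        (fun j hj => hy j (Finset.mem_insert_of_mem hj)))

end Maximizers

section Facet

variable {E : Type*} [AddCommGroup E] [Module ℝ E] [TopologicalSpace E]

def IsFacetWithDir (f : E →ₗ[ℝ] ℝ) (K : Set E) (k d : E) : Prop :=
  ∀ᶠ x in 𝓝 k, x - f (x - k) • d ∈ maximizers f K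

variable {f : E →ₗ[ℝ] ℝ} {K L : Set E} {k d s : E}

lemma IsFacetWithDir.add_maximizer [IsTopologicalAddGroup E] (h : IsFacetWithDir f K k d)
    (hs : s ∈ maximizers f L) : IsFacetWithDir f (K + L) (k + s) d := by
  have hshift : Tendsto (· - s) (𝓝 (k + s)) (𝓝 k) :=
    (continuous_sub_right s).tendsto' _ _ (add_sub_cancel_right k s)
  filter_upwards [hshift.eventually h] with x hx
  convert add_mem_maximizers_add hx hs using 1
  rw [sub_sub x s k, add_comm s k]
  abel

lemma IsFacetWithDir.smul [ContinuousConstSMul ℝ E] (h : IsFacetWithDir f K k d) {c : ℝ}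
    (hc : 0 < c) : IsFacetWithDir f (c • K) (c • k) d := by
  have hscale : Tendsto (c⁻¹ • ·) (𝓝 (c • k)) (𝓝 k) :=
    (continuous_const_smul c⁻¹).tendsto' _ _ (inv_smul_smul₀ hc.ne' k)
  filter_upwards [hscale.eventually h] with x hx
  have hx' := smul_mem_maximizers_smul hc.le hx
  rwa [smul_sub, smul_inv_smul₀ hc.ne', smul_smul, ← smul_eq_mul, ← map_smul, smul_sub,
    smul_inv_smul₀ hc.ne'] at hx'

end Facet

theorem facet_inherited_by_minkowski_combination_general
    {n J : ℕ} (hJ : 0 < J) (K : Fin J → Set (EuclideanSpace ℝ (Fin n)))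
    (p : Fin J → ℝ) (hp : ∀ j, 0 < p j)
    (f : EuclideanSpace ℝ (Fin n) →ₗ[ℝ] ℝ)
    (k : Fin J → EuclideanSpace ℝ (Fin n))
    (d : EuclideanSpace ℝ (Fin n))
    (hfacet : ∃ U ∈ nhds (k ⟨0, hJ⟩), ∀ x ∈ U,
      x - f (x - k ⟨0, hJ⟩) • d ∈ {y ∈ K ⟨0, hJ⟩ | ∀ y' ∈ K ⟨0, hJ⟩, f y' ≤ f y})
    (hkj : ∀ j : Fin J, j ≠ ⟨0, hJ⟩ → k j ∈ {y ∈ K j | ∀ y' ∈ K j, f y' ≤ f y}) :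
    ∃ d' : EuclideanSpace ℝ (Fin n), ∃ U ∈ nhds (∑ j, p j • k j), ∀ x ∈ U,
      x - f (x - ∑ j, p j • k j) • d' ∈
        {y ∈ ∑ j, p j • K j | ∀ y' ∈ ∑ j, p j • K j, f y' ≤ f y} := by
  set i₀ : Fin J := ⟨0, hJ⟩
  have hrest : ∑ j ∈ Finset.univ.erase i₀, p j • k j ∈
      maximizers f (∑ j ∈ Finset.univ.erase i₀, p j • K j) :=
    sum_smul_mem_maximizers_sum_smul _ (fun j _ => (hp j).le)
      (fun j hj => hkj j (Finset.ne_of_mem_erase hj))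
  have hfacet₀ : IsFacetWithDir f (K i₀) (k i₀) d := eventually_iff_exists_mem.mpr hfacet
  have hcomb := (hfacet₀.smul (hp i₀)).add_maximizer hrest
  rw [Finset.add_sum_erase _ (fun j => p j • K j) (Finset.mem_univ i₀),
    Finset.add_sum_erase _ (fun j => p j • k j) (Finset.mem_univ i₀)] at hcomb
  exact ⟨d, eventually_iff_exists_mem.mp hcomb⟩

theorem facet_inherited_by_minkowski_combination
    {n J : ℕ} (hJ : 0 < J) (K : Fin J → Set (EuclideanSpace ℝ (Fin n)))
    (hKne : ∀ j, (K j).Nonempty) (hKc : ∀ j, IsCompact (K j))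
    (hKconv : ∀ j, Convex ℝ (K j))
    (p : Fin J → ℝ) (hp : ∀ j, 0 < p j) (hpsum : ∑ j, p j = 1)
    (f : EuclideanSpace ℝ (Fin n) →ₗ[ℝ] ℝ) (hf : f ≠ 0)
    (k : Fin J → EuclideanSpace ℝ (Fin n))
    (hk0 : k ⟨0, hJ⟩ ∈ K ⟨0, hJ⟩)
    (d : EuclideanSpace ℝ (Fin n))
    (hfacet : ∃ U ∈ nhds (k ⟨0, hJ⟩), ∀ x ∈ U,
      x - f (x - k ⟨0, hJ⟩) • d ∈ {y ∈ K ⟨0, hJ⟩ | ∀ y' ∈ K ⟨0, hJ⟩, f y' ≤ f y})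
    (hkj : ∀ j : Fin J, j ≠ ⟨0, hJ⟩ → k j ∈ {y ∈ K j | ∀ y' ∈ K j, f y' ≤ f y}) :
    ∃ d' : EuclideanSpace ℝ (Fin n), ∃ U ∈ nhds (∑ j, p j • k j), ∀ x ∈ U,
      x - f (x - ∑ j, p j • k j) • d' ∈
        {y ∈ ∑ j, p j • K j | ∀ y' ∈ ∑ j, p j • K j, f y' ≤ f y} :=
  facet_inherited_by_minkowski_combination_general hJ K p hp f k d hfacet hkj
end
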